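/- Let i ≥ 1 and m ≥ 1. If there is a normal derivation in natural deduction for M→ of the atom C whose open assumptions are exactly m occurrences of the formula ξ_i, then there is a normal derivation of C whose open assumptions are exactly 2m occurrences of the formula ξ_{i+1}. -/

import Mathlib

/-- Formulas of purely implicational logic, built from atoms (numbered by `ℕ`)
by the single connective `→` (`impl`). -/
inductive Fm : Type
  | atom : ℕ → Fm
  | impl : Fm → Fm → Fm
deriving DecidableEq

/-- χ[X,Y] = (((X → Y) → X) → X) → Y. -/
def chi (X Y : Fm) : Fm := (((X.impl Y).impl X).impl X).impl Y

/-- The atom `Fm.atom 0` is C, and `Fm.atom k` is D_k for k ≥ 1.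
ξ₁ = χ[D₁, C] and ξ_{i+1} = χ[D_{i+1}, ξ_i]  (the value at 0 is irrelevant). -/
def xi : ℕ → Fm
  | 0 => chi (.atom 1) (.atom 0)
  | 1 => chi (.atom 1) (.atom 0)
  | n + 2 => chi (.atom (n + 2)) (xi (n + 1))

/-- φ_n = ξ_n → C. -/
def phi (n : ℕ) : Fm := (xi n).impl (.atom 0)

/-- Natural deduction derivations for M→, indexed by the multiset of open
assumption occurrences and the conclusion.  `assume a` is a one-occurrence
assumption of `a`; `intro n` is →-introduction discharging exactly `n`
occurrences of the assumption `a`; `elim` is →-elimination whose second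
premise (the implication) is the major premise. -/
inductive Deriv : Multiset Fm → Fm → Type
  | assume (a : Fm) : Deriv {a} a
  | intro {Γ : Multiset Fm} {a b : Fm} (n : ℕ)
      (d : Deriv (Γ + Multiset.replicate n a) b) : Deriv Γ (a.impl b)
  | elim {Γ Δ : Multiset Fm} {a b : Fm}
      (minor : Deriv Γ a) (major : Deriv Δ (a.impl b)) : Deriv (Γ + Δ) b

/-- The last rule of the derivation is an →-introduction. -/
def Deriv.isIntro : ∀ {Γ b}, Deriv Γ b → Prop
  | _, _, .intro _ _ => True
  | _, _, _ => False

/-- A derivation is normal if no formula occurrence is both the conclusion of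
an →-introduction and the major premise of an →-elimination. -/
def Deriv.normal : ∀ {Γ b}, Deriv Γ b → Prop
  | _, _, .assume _ => True
  | _, _, .intro _ d => d.normal
  | _, _, .elim minor major => minor.normal ∧ major.normal ∧ ¬ major.isIntro


/-!
The derivation of `Y` from two copies of `χ[X,Y]` ending in an elimination: from `χ[X,Y]`
and a vacuously discharged `X` one gets `Y`, hence `X → Y`, hence `((X → Y) → X) → X`, and a
second copy of `χ[X,Y]` yields `Y`. Since `ξ_{i+1} = χ[D_{i+1}, ξ_i]`, this derives `ξ_i`
from two copies of `ξ_{i+1}`. Substituting it for each of the `m` assumptions `ξ_i` keeps the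
derivation normal: the substituted derivation ends in an elimination, so even where an
assumption occurred as a major premise no new detour is created.
-/

theorem Multiset.exists_decomposition_of_add_eq_add {α : Type*} {Γ₁ Γ₂ S T : Multiset α}
    (h : Γ₁ + Γ₂ = S + T) :
    ∃ S₁ S₂ T₁ T₂, S = S₁ + S₂ ∧ T = T₁ + T₂ ∧ Γ₁ = S₁ + T₁ ∧ Γ₂ = S₂ + T₂ := by
  classical
  refine ⟨Γ₁ - Γ₁ ∩ T, Γ₂ - (T - Γ₁ ∩ T), Γ₁ ∩ T, T - Γ₁ ∩ T, ?_, ?_, ?_, ?_⟩ <;>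
  · ext x
    have hx := congrArg (Multiset.count x) h
    simp only [Multiset.count_add, Multiset.count_sub, Multiset.count_inter] at hx ⊢
    omega

namespace Deriv

def cast {Γ Γ' : Multiset Fm} {b : Fm} (h : Γ = Γ') (d : Deriv Γ b) : Deriv Γ' b :=
  h ▸ d

@[simp] theorem normal_cast {Γ Γ' : Multiset Fm} {b : Fm} (h : Γ = Γ') (d : Deriv Γ b) :
    (d.cast h).normal ↔ d.normal := by
  subst h; rfl

@[simp] theorem isIntro_cast {Γ Γ' : Multiset Fm} {b : Fm} (h : Γ = Γ') (d : Deriv Γ b) :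
    (d.cast h).isIntro ↔ d.isIntro := by
  subst h; rfl

/-- Substitution of `e` for `k` open assumptions `a`; the clause `d'.isIntro → d.isIntro` is the
invariant that keeps major premises of eliminations off introductions. -/
theorem exists_normal_subst {Γ : Multiset Fm} {b : Fm} (d : Deriv Γ b) (hd : d.normal)
    {a : Fm} {Δ : Multiset Fm} {e : Deriv Δ a} (he : e.normal) (hei : ¬ e.isIntro)
    (S : Multiset Fm) (k : ℕ) (hΓ : Γ = S + Multiset.replicate k a) :
    ∃ d' : Deriv (S + k • Δ) b, d'.normal ∧ (d'.isIntro → d.isIntro) := by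
  induction d generalizing S k with
  | assume c =>
    rcases k with _ | k
    · exact ⟨(assume c).cast (by simpa using hΓ), (normal_cast _ _).mpr trivial,
        (isIntro_cast _ _).mp⟩
    · have hcard := congrArg Multiset.card hΓ
      simp only [Multiset.card_singleton, Multiset.card_add, Multiset.card_replicate] at hcard
      obtain ⟨rfl, rfl⟩ : S = 0 ∧ k = 0 := ⟨Multiset.card_eq_zero.mp (by omega), by omega⟩
      obtain rfl : c = a := by simpa using hΓ
      exact ⟨e.cast (by simp), (normal_cast _ _).mpr he,
        fun h => absurd ((isIntro_cast _ _).mp h) hei⟩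
  | intro n d ih =>
    obtain ⟨d', hd', -⟩ := ih hd (S + Multiset.replicate n _) k (by rw [hΓ, add_right_comm])
    exact ⟨intro n (d'.cast (add_right_comm _ _ _)), by simpa [normal] using hd', fun _ => trivial⟩
  | elim minor major ih₁ ih₂ =>
    obtain ⟨hn₁, hn₂, hni⟩ := hd
    obtain ⟨S₁, S₂, T₁, T₂, rfl, hT, rfl, rfl⟩ :=
      Multiset.exists_decomposition_of_add_eq_add hΓ
    obtain ⟨k₁, -, rfl⟩ := Multiset.le_replicate_iff.mp (hT ▸ Multiset.le_add_right T₁ T₂)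
    obtain ⟨k₂, -, rfl⟩ := Multiset.le_replicate_iff.mp (hT ▸ Multiset.le_add_left T₂ _)
    have hk : k = k₁ + k₂ := by simpa using congrArg Multiset.card hT
    obtain ⟨d₁, hd₁, -⟩ := ih₁ hn₁ S₁ k₁ rfl
    obtain ⟨d₂, hd₂, hi₂⟩ := ih₂ hn₂ S₂ k₂ rfl
    have hctx : S₁ + k₁ • Δ + (S₂ + k₂ • Δ) = S₁ + S₂ + k • Δ := by
      rw [hk, add_nsmul, add_add_add_comm]
    exact ⟨(elim d₁ d₂).cast hctx, by simpa [normal] using ⟨hd₁, hd₂, mt hi₂ hni⟩,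
      fun h => False.elim ((isIntro_cast hctx _).mp h)⟩

end Deriv

def derivOfTwoChi (X Y : Fm) : Deriv (Multiset.replicate 2 (chi X Y)) Y :=
  let ξ := chi X Y
  let xToY : Deriv {ξ} (X.impl Y) :=
    .intro 1 ((Deriv.elim (.intro 0 (.assume X)) (.assume ξ)).cast (add_comm _ _))
  let peirce : Deriv {ξ} (((X.impl Y).impl X).impl X) :=
    .intro 1 (.elim xToY (.assume _))
  .elim peirce (.assume ξ)

theorem derivOfTwoChi_normal (X Y : Fm) : (derivOfTwoChi X Y).normal := by
  simp only [derivOfTwoChi, Deriv.normal, Deriv.normal_cast, Deriv.isIntro, not_false_eq_true,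
    and_self]

theorem derivOfTwoChi_not_isIntro (X Y : Fm) : ¬ (derivOfTwoChi X Y).isIntro := by
  simp [derivOfTwoChi, Deriv.isIntro]

theorem xi_succ {i : ℕ} (hi : 1 ≤ i) : xi (i + 1) = chi (.atom (i + 1)) (xi i) := by
  obtain ⟨n, rfl⟩ := Nat.exists_eq_add_of_le' hi
  rfl

theorem double_assumptions_general (i : ℕ) (hi : 1 ≤ i) (m : ℕ)
    (h : ∃ d : Deriv (Multiset.replicate m (xi i)) (.atom 0), d.normal) :
    ∃ d' : Deriv (Multiset.replicate (2 * m) (xi (i + 1))) (.atom 0), d'.normal := by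
  obtain ⟨d, hd⟩ := h
  obtain ⟨d', hd', -⟩ := d.exists_normal_subst hd (derivOfTwoChi_normal _ _)
    (derivOfTwoChi_not_isIntro _ _) 0 m (zero_add _).symm
  have hctx : 0 + m • Multiset.replicate 2 (chi (.atom (i + 1)) (xi i)) =
      Multiset.replicate (2 * m) (xi (i + 1)) := by
    rw [zero_add, Multiset.nsmul_replicate, mul_comm, xi_succ hi]
  exact ⟨d'.cast hctx, (Deriv.normal_cast hctx d').mpr hd'⟩

/-- for i ≥ 1 and m ≥ 1, if there is a normal derivation of the
atom C whose open assumptions are exactly m occurrences of ξ_i, then there is a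
normal derivation of C whose open assumptions are exactly 2·m occurrences of
ξ_{i+1}. -/
theorem double_assumptions (i : ℕ) (hi : 1 ≤ i) (m : ℕ) (hm : 1 ≤ m)
    (h : ∃ d : Deriv (Multiset.replicate m (xi i)) (.atom 0), d.normal) :
    ∃ d' : Deriv (Multiset.replicate (2 * m) (xi (i + 1))) (.atom 0), d'.normal :=
  double_assumptions_general i hi m h
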